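/- arXiv:0806.4156 — 3 statements merged into one kernel-verified Lean document; each statement's English description precedes it below -/
import Mathlib

section
/- Let R be a purely infinite unital ring whose identity element 1 is properly infinite. Then the matrix ring Mₙ(R) is properly purely infinite for every n ≥ 1. -/
/-- `x ≼ y` for square matrices over a (possibly nonunital) ring: `x = α * y * β`
for some rectangular matrices `α`, `β`. -/
def MatSub {R : Type*} [NonUnitalRing R] {k n : ℕ}
    (x : Matrix (Fin k) (Fin k) R) (y : Matrix (Fin n) (Fin n) R) : Prop :=
  ∃ (α : Matrix (Fin k) (Fin n) R) (β : Matrix (Fin n) (Fin k) R), x = α * y * β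

/-- `a ⊕ b ≼ c` for ring elements: the block-diagonal matrix `diag(a, b)` satisfies
`diag(a,b) ≼ (c)` as square matrices. -/
def PairSub {R : Type*} [NonUnitalRing R] (a b c : R) : Prop :=
  MatSub !![a, 0; 0, b] !![c]

/-- `a ≼ b` for ring elements: `a = α * b * β` for some ring elements. -/
def ElemSub {R : Type*} [NonUnitalRing R] (a b : R) : Prop :=
  ∃ α β : R, a = α * b * β

/-- `K(a) = { x | a ⊕ x ≼ a }`. -/
def KSet {R : Type*} [NonUnitalRing R] (a : R) : Set R := { x | PairSub a x a }

/-- An element `a` is infinite if `a ⊕ x ≼ a` for some nonzero `x`, i.e. `K(a) ≠ 0`. -/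
def IsInfiniteElem {R : Type*} [NonUnitalRing R] (a : R) : Prop :=
  ∃ x : R, x ≠ 0 ∧ PairSub a x a

/-- An element `a` is properly infinite if `a ≠ 0` and `a ⊕ a ≼ a`. -/
def IsProperlyInfiniteElem {R : Type*} [NonUnitalRing R] (a : R) : Prop :=
  a ≠ 0 ∧ PairSub a a a

/-- A ring is s-unital if each element `x` admits `u, v` with `u * x = x` and `x * v = x`. -/
def IsSUnitalRing (R : Type*) [NonUnitalRing R] : Prop :=
  ∀ x : R, (∃ u : R, u * x = x) ∧ (∃ v : R, x * v = x)

/-- `b` belongs to `RaR`, the set of finite sums `Σ xᵢ * a * yᵢ`. -/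
def MemRaR {R : Type*} [NonUnitalRing R] (a b : R) : Prop :=
  ∃ (n : ℕ) (x y : Fin n → R), b = ∑ i, x i * a * y i

/-- A (possibly nonunital) ring is a division ring: it has a nonzero multiplicative identity
with respect to which every nonzero element is two-sided invertible. -/
def IsDivisionRingPred (R : Type*) [NonUnitalRing R] : Prop :=
  ∃ u : R, u ≠ 0 ∧ (∀ x : R, u * x = x ∧ x * u = x) ∧
    ∀ x : R, x ≠ 0 → ∃ y : R, x * y = u ∧ y * x = u

/-- A ring `R` is purely infinite if no quotient of `R` by a two-sided ideal is a division
ring, and `b ∈ RaR` implies `b = x * a * y` for some `x, y ∈ R`. -/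
def IsPurelyInfiniteRing (R : Type*) [NonUnitalRing R] : Prop :=
  (∀ I : TwoSidedIdeal R, ¬ IsDivisionRingPred I.ringCon.Quotient) ∧
  ∀ a b : R, MemRaR a b → ElemSub b a

/-- A ring is properly purely infinite if every nonzero element is properly infinite. -/
def IsProperlyPurelyInfiniteRing (R : Type*) [NonUnitalRing R] : Prop :=
  ∀ a : R, a ≠ 0 → IsProperlyInfiniteElem a

/-- An idempotent `e` is infinite if `e ∼ f ≤ e` for some idempotent `f ≠ e`. -/
def IsInfiniteIdem {R : Type*} [NonUnitalRing R] (e : R) : Prop :=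
  IsIdempotentElem e ∧ ∃ f : R, IsIdempotentElem f ∧ (∃ x y : R, e = x * y ∧ f = y * x) ∧
    e * f = f ∧ f * e = f ∧ f ≠ e

/-- An exchange ring: for each `x` there are an idempotent `e` and elements `r, s` with
`e = x * r = x + s - x * s`. -/
def IsExchangeRing (R : Type*) [NonUnitalRing R] : Prop :=
  ∀ x : R, ∃ e r s : R, IsIdempotentElem e ∧ e = x * r ∧ e = x + s - x * s

/-- A ring has local units if every finite subset is contained in a corner `eRe`
for some idempotent `e`. -/
def HasLocalUnits (R : Type*) [NonUnitalRing R] : Prop :=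
  ∀ s : Finset R, ∃ e : R, IsIdempotentElem e ∧ ∀ x ∈ s, ∃ r : R, x = e * r * e

lemma pairSub_iff' {R : Type*} [NonUnitalRing R] (a b c : R) :
    PairSub a b c ↔ ∃ p q u v : R, p * c * u = a ∧ p * c * v = 0 ∧ q * c * u = 0 ∧ q * c * v = b := by
  constructor
  · rintro ⟨α, β, h⟩
    refine ⟨α 0 0, α 1 0, β 0 0, β 0 1, ?_, ?_, ?_, ?_⟩
    · simpa [Matrix.mul_apply] using (congrFun (congrFun h 0) 0).symm
    · simpa [Matrix.mul_apply] using (congrFun (congrFun h 0) 1).symm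
    · simpa [Matrix.mul_apply] using (congrFun (congrFun h 1) 0).symm
    · simpa [Matrix.mul_apply] using (congrFun (congrFun h 1) 1).symm
  · rintro ⟨p, q, u, v, h1, h2, h3, h4⟩
    refine ⟨!![p; q], !![u, v], ?_⟩
    ext i j
    fin_cases i <;> fin_cases j <;>
      simp [Matrix.mul_apply, h1, h2, h3, h4]

lemma exists_isometries' {R : Type*} [Ring R] (x₁ x₂ y₁ y₂ : R)
    (h11 : x₁ * y₁ = 1) (h12 : x₁ * y₂ = 0) (h21 : x₂ * y₁ = 0) (h22 : x₂ * y₂ = 1) :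
    ∀ n : ℕ, ∃ s t : Fin n → R, ∀ i j, t i * s j = if i = j then 1 else 0 := by
  intro n
  induction n with
  | zero => exact ⟨Fin.elim0, Fin.elim0, fun i => i.elim0⟩
  | succ m ih =>
    obtain ⟨s, t, hst⟩ := ih
    refine ⟨Fin.snoc (fun i => y₁ * s i) y₂, Fin.snoc (fun i => t i * x₁) x₂, ?_⟩
    intro i j
    refine Fin.lastCases ?_ (fun i' => ?_) i <;>
      refine Fin.lastCases ?_ (fun j' => ?_) j
    · simp [h22]
    · have hne : (Fin.last m) ≠ j'.castSucc := (Fin.castSucc_lt_last j').ne'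
      simp only [Fin.snoc_castSucc, Fin.snoc_last, hne, if_false]
      rw [← mul_assoc, h21, zero_mul]
    · have hne : i'.castSucc ≠ (Fin.last m) := (Fin.castSucc_lt_last i').ne
      simp only [Fin.snoc_castSucc, Fin.snoc_last, hne, if_false]
      rw [mul_assoc, h12, mul_zero]
    · simp only [Fin.snoc_castSucc]
      rw [mul_assoc, ← mul_assoc x₁, h11, one_mul, hst i' j']
      simp [Fin.castSucc_inj]


/-- Lemma 5.3 (MatricesAndPropInf): if `R` is a purely infinite unital ring whose identity is
properly infinite, then `Mₙ(R)` is properly purely infinite for all `n ≥ 1`. -/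
theorem matrix_properlyPurelyInfinite_of_one_properlyInfinite {R : Type*} [Ring R]
    (hpi : IsPurelyInfiniteRing R) (h1 : IsProperlyInfiniteElem (1 : R)) :
    ∀ n : ℕ, 0 < n → IsProperlyPurelyInfiniteRing (Matrix (Fin n) (Fin n) R) := by
  intro n _ A hA
  obtain ⟨p0, q0, u0, v0, e11, e12, e21, e22⟩ := (pairSub_iff' 1 1 1).mp h1.2
  have f11 : p0 * u0 = 1 := by simpa using e11
  have f12 : p0 * v0 = 0 := by simpa using e12
  have f21 : q0 * u0 = 0 := by simpa using e21
  have f22 : q0 * v0 = 1 := by simpa using e22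
  obtain ⟨s, t, hst⟩ := exists_isometries' p0 q0 u0 v0 f11 f12 f21 f22 n
  set b : R := ∑ i, ∑ j, s i * A i j * t j with hbdef
  have hb : ∀ p q : Fin n, t p * b * s q = A p q := by
    intro p q
    have term : ∀ i j : Fin n, t p * (s i * A i j * t j) * s q
        = (if p = i then (1:R) else 0) * A i j * (if j = q then (1:R) else 0) := by
      intro i j
      rw [show t p * (s i * A i j * t j) * s q = (t p * s i) * A i j * (t j * s q) from by
        noncomm_ring, hst, hst]
    rw [hbdef]
    simp only [Finset.mul_sum, Finset.sum_mul, term]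
    simp [ite_mul, mul_ite, Finset.sum_ite_eq, Finset.sum_ite_eq']
  have hbne : b ≠ 0 := by
    intro h0
    apply hA
    ext p q
    have := hb p q
    rw [h0] at this
    simpa using this.symm
  have hmem : MemRaR b (u0 * b * p0 + v0 * b * q0) :=
    ⟨2, ![u0, v0], ![p0, q0], by simp [Fin.sum_univ_succ]⟩
  obtain ⟨X, Y, hXY⟩ := hpi.2 b _ hmem
  have step : ∀ w z : R, w * (u0 * b * p0 + v0 * b * q0) * z
      = (w * u0) * b * (p0 * z) + (w * v0) * b * (q0 * z) := by
    intro w z; noncomm_ring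
  have g : ∀ w z : R, (w * X) * b * (Y * z) = w * (u0 * b * p0 + v0 * b * q0) * z := by
    intro w z
    rw [hXY]
    noncomm_ring
  have g11 : (p0 * X) * b * (Y * u0) = b := by
    rw [g, step, f11, f12, f21]; simp
  have g12 : (p0 * X) * b * (Y * v0) = 0 := by
    rw [g, step, f12, f22, f11]; simp
  have g21 : (q0 * X) * b * (Y * u0) = 0 := by
    rw [g, step, f21, f22, f11]; simp
  have g22 : (q0 * X) * b * (Y * v0) = b := by
    rw [g, step, f22, f21, f12]; simp
  set M : R → Matrix (Fin n) (Fin n) R := fun r => Matrix.of fun i j => t i * r * s j with hM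
  have Mmul : ∀ r r' : R, M r * A * M r' = M (r * b * r') := by
    intro r r'
    ext i j
    show (M r * A * M r') i j = t i * (r * b * r') * s j
    rw [hbdef]
    simp only [Matrix.mul_apply, hM, Matrix.of_apply, Finset.mul_sum, Finset.sum_mul]
    rw [Finset.sum_comm]
    refine Finset.sum_congr rfl fun q _ => Finset.sum_congr rfl fun p _ => ?_
    noncomm_ring
  have MbA : M b = A := by
    ext i j
    exact hb i j
  have M0 : M 0 = 0 := by
    ext i j
    simp [hM]
  refine ⟨hA, (pairSub_iff' A A A).mpr
    ⟨M (p0 * X), M (q0 * X), M (Y * u0), M (Y * v0), ?_, ?_, ?_, ?_⟩⟩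
  · rw [Mmul, g11, MbA]
  · rw [Mmul, g12, M0]
  · rw [Mmul, g21, M0]
  · rw [Mmul, g22, MbA]
end

section
/- Let R be a ring with local units. If R is properly purely infinite, then the matrix ring Mₙ(R) is properly purely infinite for every n ≥ 1. -/
private def sigF {R : Type*} [NonUnitalRing R] (s1 s2 : R) : ℕ → R
  | 0 => s1
  | k+1 => s2 * sigF s1 s2 k

private def tauF {R : Type*} [NonUnitalRing R] (t1 t2 : R) : ℕ → R
  | 0 => t1
  | k+1 => tauF t1 t2 k * t2

private lemma esigF {R : Type*} [NonUnitalRing R] {e s1 s2 : R}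
    (h1 : e * s1 = s1) (h2 : e * s2 = s2) : ∀ l, e * sigF s1 s2 l = sigF s1 s2 l
  | 0 => h1
  | l+1 => by rw [sigF, ← mul_assoc, h2]

private lemma tausigF {R : Type*} [NonUnitalRing R] {e s1 s2 t1 t2 : R}
    (hes1 : e * s1 = s1) (hes2 : e * s2 = s2)
    (h11 : t1 * s1 = e) (h12 : t1 * s2 = 0) (h21 : t2 * s1 = 0) (h22 : t2 * s2 = e) :
    ∀ k l, tauF t1 t2 k * sigF s1 s2 l = if k = l then e else 0 := by
  intro k
  induction k with
  | zero =>
    intro l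
    cases l with
    | zero => simpa [tauF, sigF] using h11
    | succ l => simp [tauF, sigF, ← mul_assoc, h12]
  | succ k ih =>
    intro l
    cases l with
    | zero => simp [tauF, sigF, mul_assoc, h21]
    | succ l =>
      have h : tauF t1 t2 (k+1) * sigF s1 s2 (l+1)
          = tauF t1 t2 k * sigF s1 s2 l := by
        rw [tauF, sigF, mul_assoc, ← mul_assoc t2, h22, esigF hes1 hes2]
      rw [h, ih l]
      simp


/-- Proposition 5.4 (pinftomatrices): let `R` be a ring with local units. If `R` is properly
purely infinite, then so is every matrix ring `Mₙ(R)`, `n ≥ 1`. -/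
theorem matrix_properlyPurelyInfinite_of_localUnits {R : Type*} [NonUnitalRing R]
    (hlu : HasLocalUnits R) (hpi : IsProperlyPurelyInfiniteRing R) :
    ∀ n : ℕ, 0 < n → IsProperlyPurelyInfiniteRing (Matrix (Fin n) (Fin n) R) := by
  classical
  intro n _hn A hA
  -- a nonzero entry
  have hex : ∃ k l, A k l ≠ 0 := by
    by_contra h
    push_neg at h
    exact hA (by ext k l; simpa using h k l)
  obtain ⟨k0, l0, hk0⟩ := hex
  -- local unit e absorbing all entries
  obtain ⟨e, he, hcover⟩ :=
    hlu ((Finset.univ : Finset (Fin n × Fin n)).image fun p => A p.1 p.2)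
  have habs : ∀ k l, e * A k l = A k l ∧ A k l * e = A k l := by
    intro k l
    obtain ⟨r, hr⟩ := hcover (A k l) (Finset.mem_image.mpr ⟨(k, l), Finset.mem_univ _, rfl⟩)
    constructor
    · rw [hr, ← mul_assoc, ← mul_assoc, he.eq]
    · rw [hr, mul_assoc, he.eq]
  have he0 : e ≠ 0 := by
    intro h
    exact hk0 (by rw [← (habs k0 l0).1, h, zero_mul])
  -- proper infiniteness of e gives "isometries"
  obtain ⟨-, α, β, hαβ⟩ := hpi e he0
  have hE : ∀ i j : Fin 2, α i 0 * e * β 0 j = (!![e, 0; 0, e] : Matrix (Fin 2) (Fin 2) R) i j := by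
    intro i j
    rw [hαβ]
    simp [Matrix.mul_apply]
  set t1 : R := e * α 0 0 * e with ht1
  set t2 : R := e * α 1 0 * e with ht2
  set s1 : R := e * β 0 0 * e with hs1
  set s2 : R := e * β 0 1 * e with hs2
  have corner_mul : ∀ a b : R, (e * a * e) * (e * b * e) = e * (a * e * b) * e := by
    intro a b
    calc (e * a * e) * (e * b * e) = e * (a * (e * e) * b) * e := by noncomm_ring
      _ = e * (a * e * b) * e := by rw [he.eq]
  have r11 : t1 * s1 = e := by
    rw [ht1, hs1, corner_mul, hE 0 0]
    simp [he.eq]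
  have r12 : t1 * s2 = 0 := by
    rw [ht1, hs2, corner_mul, hE 0 1]
    simp
  have r21 : t2 * s1 = 0 := by
    rw [ht2, hs1, corner_mul, hE 1 0]
    simp
  have r22 : t2 * s2 = e := by
    rw [ht2, hs2, corner_mul, hE 1 1]
    simp [he.eq]
  have hes1 : e * s1 = s1 := by rw [hs1, ← mul_assoc, ← mul_assoc, he.eq]
  have hes2 : e * s2 = s2 := by rw [hs2, ← mul_assoc, ← mul_assoc, he.eq]
  set sig : ℕ → R := sigF s1 s2 with hsig
  set tau : ℕ → R := tauF t1 t2 with htau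
  have hts : ∀ k l : Fin n, tau ↑k * sig ↑l = if k = l then e else 0 := by
    intro k l
    rw [htau, hsig, tausigF hes1 hes2 r11 r12 r21 r22]
    simp [Fin.val_inj]
  -- the compressing element
  set s : R := ∑ m : Fin n, ∑ m' : Fin n, sig ↑m * A m m' * tau ↑m' with hs
  have key2 : ∀ k l : Fin n, tau ↑k * s * sig ↑l = A k l := by
    intro k l
    have expand : tau ↑k * s * sig ↑l
        = ∑ m : Fin n, ∑ m' : Fin n, (tau ↑k * sig ↑m) * (A m m' * (tau ↑m' * sig ↑l)) := by
      rw [hs]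
      simp only [Finset.mul_sum, Finset.sum_mul, mul_assoc]
    rw [expand]
    simp only [hts, ite_mul, mul_ite, zero_mul, mul_zero]
    simp [Finset.sum_ite_eq, (habs k l).1, (habs k l).2]
  have hs0 : s ≠ 0 := by
    intro h
    exact hk0 (by rw [← key2 k0 l0, h, mul_zero, zero_mul])
  -- proper infiniteness of s
  obtain ⟨-, γ, δ, hγδ⟩ := hpi s hs0
  have hG : ∀ i j : Fin 2, γ i 0 * s * δ 0 j = (!![s, 0; 0, s] : Matrix (Fin 2) (Fin 2) R) i j := by
    intro i j
    rw [hγδ]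
    simp [Matrix.mul_apply]
  -- matrix witnesses
  set Pm : Fin 2 → Matrix (Fin n) (Fin n) R :=
    fun i => Matrix.of fun k l => tau ↑k * γ i 0 * sig ↑l with hPm
  set Um : Fin 2 → Matrix (Fin n) (Fin n) R :=
    fun j => Matrix.of fun k l => tau ↑k * δ 0 j * sig ↑l with hUm
  have piece : ∀ (i j : Fin 2) (k l : Fin n),
      (Pm i * A * Um j) k l = tau ↑k * (γ i 0 * s * δ 0 j) * sig ↑l := by
    intro i j k l
    rw [hPm, hUm, hs]
    simp only [Matrix.mul_apply, Matrix.of_apply, Finset.sum_mul, Finset.mul_sum, mul_assoc]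
    rw [Finset.sum_comm]
  have block : ∀ i j : Fin 2, Pm i * A * Um j
      = (!![A, 0; 0, A] : Matrix (Fin 2) (Fin 2) (Matrix (Fin n) (Fin n) R)) i j := by
    intro i j
    ext k l
    rw [piece i j k l, hG i j]
    fin_cases i <;> fin_cases j <;> simp [key2]
  refine ⟨hA, Matrix.of (fun i _ => Pm i), Matrix.of (fun _ j => Um j), ?_⟩
  have outer : ∀ i j : Fin 2,
      ((Matrix.of (fun i (_ : Fin 1) => Pm i)) * !![A] * (Matrix.of (fun (_ : Fin 1) j => Um j))) i j
      = Pm i * A * Um j := by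
    intro i j
    simp [Matrix.mul_apply, Fin.sum_univ_one]
  ext i j : 2
  rw [outer i j, block i j]
end

section
/- Let R be an irreducible, purely infinite, unital ring in which every nonzero two-sided ideal contains a nonzero idempotent. Then the identity element 1 of R is infinite; that is, there is an idempotent f ∈ R with f ≠ 1 and f equivalent to 1 (equivalently, K(1) ≠ 0). -/

private lemma shift2' {R : Type*} [Ring R] {a b d : R} (h : a * b = d) (t : R) :
    a * (b * t) = d * t := by rw [← mul_assoc, h]

private lemma shift3' {R : Type*} [Ring R] {a b c d : R} (h : a * b * c = d) (t : R) :
    a * (b * (c * t)) = d * t := by rw [← mul_assoc, ← mul_assoc, h]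

private lemma memRaR_self' {R : Type*} [Ring R] (a : R) : MemRaR a a :=
  ⟨1, fun _ => 1, fun _ => 1, by simp⟩

/-- The two-sided ideal `RaR` generated by `a` in a unital ring. -/
def idealOfElem' {R : Type*} [Ring R] (a : R) : TwoSidedIdeal R :=
  TwoSidedIdeal.mk' {b | MemRaR a b}
    ⟨0, ![], ![], by simp⟩
    (by
      rintro b c ⟨n, xs, ys, rfl⟩ ⟨m, us, vs, rfl⟩
      refine ⟨n + m, Fin.append xs us, Fin.append ys vs, ?_⟩
      rw [Fin.sum_univ_add]
      simp [Fin.append_left, Fin.append_right])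
    (by
      rintro b ⟨n, xs, ys, rfl⟩
      refine ⟨n, xs, fun i => -(ys i), ?_⟩
      rw [← Finset.sum_neg_distrib]
      exact Finset.sum_congr rfl fun i _ => by rw [mul_neg])
    (by
      rintro r b ⟨n, xs, ys, rfl⟩
      refine ⟨n, fun i => r * xs i, ys, ?_⟩
      rw [Finset.mul_sum]
      exact Finset.sum_congr rfl fun i _ => by noncomm_ring)
    (by
      rintro b r ⟨n, xs, ys, rfl⟩
      refine ⟨n, xs, fun i => ys i * r, ?_⟩
      rw [Finset.sum_mul]
      exact Finset.sum_congr rfl fun i _ => by noncomm_ring)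

lemma mem_idealOfElem' {R : Type*} [Ring R] {a b : R} :
    b ∈ idealOfElem' a ↔ MemRaR a b :=
  TwoSidedIdeal.mem_mk' _ _ _ _ _ _ _

/-- Lemma 5.5 (PrimePiIdempotentImplies1Infinite): let `R` be an irreducible, purely infinite,
unital ring in which every nonzero two-sided ideal contains a nonzero idempotent. Then `1 ∈ R`
is infinite: there is an idempotent `f ≠ 1` equivalent to `1`. -/
theorem one_infinite_of_irreducible_purelyInfinite {R : Type*} [Ring R] [Nontrivial R]
    (hirr : ∀ I J : TwoSidedIdeal R, (∃ x ∈ I, x ≠ 0) → (∃ x ∈ J, x ≠ 0) →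
        ∃ x : R, x ∈ I ∧ x ∈ J ∧ x ≠ 0)
    (hpi : IsPurelyInfiniteRing R)
    (hid : ∀ I : TwoSidedIdeal R, (∃ x ∈ I, x ≠ 0) → ∃ e ∈ I, e ≠ 0 ∧ IsIdempotentElem e) :
    ∃ f : R, IsIdempotentElem f ∧ f ≠ 1 ∧ ∃ x y : R, (1 : R) = x * y ∧ f = y * x := by
  by_cases hxy : ∃ x y : R, x * y = 1 ∧ y * x ≠ 1
  · obtain ⟨x, y, h1, h2⟩ := hxy
    refine ⟨y * x, ?_, h2, x, y, h1.symm, rfl⟩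
    show (y * x) * (y * x) = y * x
    rw [mul_assoc, ← mul_assoc x y x, h1, one_mul]
  · push_neg at hxy
    by_cases hs : ∀ a : R, a ≠ 0 → MemRaR a 1
    · -- R is simple; derive that R is a division ring, contradicting `hpi.1 ⊥`.
      exfalso
      have hinv : ∀ a : R, a ≠ 0 → ∃ b : R, a * b = 1 ∧ b * a = 1 := by
        intro a ha
        obtain ⟨x, y, hxy1⟩ := hpi.2 a 1 (hs a ha)
        have h1 : x * (a * y) = 1 := by rw [← mul_assoc]; exact hxy1.symm
        have h2 : a * (y * x) = 1 := by rw [← mul_assoc]; exact hxy x (a * y) h1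
        exact ⟨y * x, h2, hxy a (y * x) h2⟩
      refine hpi.1 ⊥ ⟨((1 : R) : (⊥ : TwoSidedIdeal R).ringCon.Quotient), ?_, ?_, ?_⟩
      · intro h
        rw [← RingCon.coe_zero, RingCon.eq, TwoSidedIdeal.rel_iff,
          TwoSidedIdeal.mem_bot] at h
        simp at h
      · intro z
        constructor
        · show ((1 : R) : _) * z = z
          rw [RingCon.coe_one, one_mul]
        · show z * ((1 : R) : _) = z
          rw [RingCon.coe_one, mul_one]
      · intro z hz
        obtain ⟨r, rfl⟩ := Quotient.exists_rep z
        have hr : r ≠ 0 := by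
          rintro rfl
          exact hz (RingCon.coe_zero _)
        obtain ⟨b, hb1, hb2⟩ := hinv r hr
        refine ⟨(b : _), ?_, ?_⟩
        · show ((r : R) : (⊥ : TwoSidedIdeal R).ringCon.Quotient) * ((b : R) : _)
            = ((1 : R) : _)
          rw [← RingCon.coe_mul, hb1]
        · show ((b : R) : (⊥ : TwoSidedIdeal R).ringCon.Quotient) * ((r : R) : _)
            = ((1 : R) : _)
          rw [← RingCon.coe_mul, hb2]
    · -- R is not simple: there is a nonzero `a` whose ideal is proper.
      push_neg at hs
      obtain ⟨a, ha0, hna1⟩ := hs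
      obtain ⟨e, heI, he0, heid⟩ := hid (idealOfElem' a)
        ⟨a, mem_idealOfElem'.mpr (memRaR_self' a), ha0⟩
      have hee : e * e = e := heid.eq
      have he1 : e ≠ 1 := by
        rintro rfl
        exact hna1 (mem_idealOfElem'.mp heI)
      have he10 : (1 : R) - e ≠ 0 := sub_ne_zero.mpr (Ne.symm he1)
      have hc1c1 : (1 - e) * (1 - e) = 1 - e := by
        have : (1 - e) * (1 - e) = 1 - e - e + e * e := by noncomm_ring
        rw [this, hee]; abel
      have hee1 : e * (1 - e) = 0 := by rw [mul_sub, mul_one, hee, sub_self]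
      have he1e : (1 - e) * e = 0 := by rw [sub_mul, one_mul, hee, sub_self]
      -- find a nonzero idempotent g in ReR ∩ R(1-e)R
      obtain ⟨c, hcJ1, hcJ2, hc0⟩ := hirr (idealOfElem' e) (idealOfElem' (1 - e))
        ⟨e, mem_idealOfElem'.mpr (memRaR_self' e), he0⟩
        ⟨1 - e, mem_idealOfElem'.mpr (memRaR_self' (1 - e)), he10⟩
      obtain ⟨g, hgI, hg0, hgid⟩ := hid (idealOfElem' e ⊓ idealOfElem' (1 - e))
        ⟨c, (TwoSidedIdeal.mem_inf _).mpr ⟨hcJ1, hcJ2⟩, hc0⟩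
      have hgg : g * g = g := hgid.eq
      obtain ⟨x, y, hg⟩ := hpi.2 e g
        (mem_idealOfElem'.mp ((TwoSidedIdeal.mem_inf _).mp hgI).1)
      obtain ⟨u, v, hg'⟩ := hpi.2 (1 - e) g
        (mem_idealOfElem'.mp ((TwoSidedIdeal.mem_inf _).mp hgI).2)
      -- abbreviations
      set f : R := e * (y * (g * (x * e))) with hfdef
      set h : R := (1 - e) * (v * (g * (u * (1 - e)))) with hhdef
      have hgp : x * (e * y) = g := by rw [← mul_assoc]; exact hg.symm
      have hgp' : u * ((1 - e) * v) = g := by rw [← mul_assoc]; exact hg'.symm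
      have hff : f * f = f := by
        rw [hfdef]
        simp only [mul_assoc, shift2' hee, shift2' hgg, shift3' hg.symm, hgg, hee, hgp]
      have hkey : g * (x * (f * (y * g))) = g := by
        rw [hfdef]
        simp only [mul_assoc, shift2' hee, shift2' hgg, shift3' hg.symm, hgg, hee, hgp]
      have hf0 : f ≠ 0 := by
        intro h0
        rw [h0, zero_mul, mul_zero, mul_zero] at hkey
        exact hg0 hkey.symm
      have hhh : h * h = h := by
        rw [hhdef]
        simp only [mul_assoc, shift2' hc1c1, shift2' hgg, shift3' hg'.symm, hgg, hc1c1, hgp']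
      have hkey' : g * (u * (h * (v * g))) = g := by
        rw [hhdef]
        simp only [mul_assoc, shift2' hc1c1, shift2' hgg, shift3' hg'.symm, hgg, hc1c1, hgp']
      have hh0 : h ≠ 0 := by
        intro h0
        rw [h0, zero_mul, mul_zero, mul_zero] at hkey'
        exact hg0 hkey'.symm
      have hfh : f * h = 0 := by
        rw [hfdef, hhdef]
        simp only [mul_assoc, shift2' hee1, zero_mul, mul_zero]
      have hhf : h * f = 0 := by
        rw [hfdef, hhdef]
        simp only [mul_assoc, shift2' he1e, zero_mul, mul_zero]
      set s : R := (1 - e) * (v * (g * (x * e))) with hsdef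
      set t : R := e * (y * (g * (u * (1 - e)))) with htdef
      have hsft : s * f * t = h := by
        rw [hsdef, hfdef, htdef, hhdef]
        simp only [mul_assoc, shift2' hee, shift2' hc1c1, shift2' hgg,
          shift3' hg.symm, shift3' hg'.symm, hgg, hee, hc1c1, hgp, hgp']
      set w : R := f + h with hwdef
      have hww : w * w = w := by
        rw [hwdef, add_mul, mul_add, mul_add, hff, hhh, hfh, hhf]
        abel
      have hfw : f * w = f := by rw [hwdef, mul_add, hff, hfh, add_zero]
      have hwf : w * f = f := by rw [hwdef, add_mul, hff, hhf, add_zero]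
      have hhw : h * w = h := by rw [hwdef, mul_add, hhf, hhh, zero_add]
      have hmem : MemRaR f w := by
        refine ⟨2, ![1, s], ![1, t], ?_⟩
        rw [Fin.sum_univ_two]
        simp only [Matrix.cons_val_zero, Matrix.cons_val_one, Matrix.head_cons,
          one_mul, mul_one]
        rw [hwdef, hsft]
      obtain ⟨X, Y, hwXY⟩ := hpi.2 f w hmem
      have hwp : X * (f * Y) = w := by rw [← mul_assoc]; exact hwXY.symm
      set P : R := w * (X * f) with hPdef
      set Q : R := f * (Y * w) with hQdef
      set F : R := f * (Y * (w * (X * f))) with hFdef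
      have hPQ : P * Q = w := by
        rw [hPdef, hQdef]
        simp only [mul_assoc, shift2' hff, shift2' hww, shift3' hwXY.symm,
          shift2' hfw, shift2' hwf, hww, hff, hfw, hwf, hwp]
      have hQP : Q * P = F := by
        rw [hPdef, hQdef, hFdef]
        simp only [mul_assoc, shift2' hff, shift2' hww, shift3' hwXY.symm,
          shift2' hfw, shift2' hwf, hww, hff, hfw, hwf, hwp]
      have hPw : P * w = P := by
        rw [hPdef]
        simp only [mul_assoc, shift2' hfw, hfw]
      have hwQ : w * Q = Q := by
        rw [hQdef]
        simp only [mul_assoc, shift2' hwf, hwf]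
      have hQw : Q * w = Q := by
        rw [hQdef]
        simp only [mul_assoc, shift2' hww, hww]
      have hwP : w * P = P := by
        rw [hPdef]
        simp only [mul_assoc, shift2' hww, hww]
      have hhF : h * F = 0 := by
        rw [hFdef]
        simp only [← mul_assoc, hhf, zero_mul]
      have hFw : F ≠ w := by
        intro hEq
        apply hh0
        calc h = h * w := hhw.symm
        _ = h * F := by rw [hEq]
        _ = 0 := hhF
      have h1 : (P + 1 - w) * (Q + 1 - w) = 1 := by
        have hx : (P + 1 - w) * (Q + 1 - w)
            = P * Q + P - P * w + Q + 1 - w - w * Q - w + w * w := by noncomm_ring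
        rw [hx, hPQ, hPw, hwQ, hww]
        abel
      have h2 : (Q + 1 - w) * (P + 1 - w) = F + 1 - w := by
        have hx : (Q + 1 - w) * (P + 1 - w)
            = Q * P + Q - Q * w + P + 1 - w - w * P - w + w * w := by noncomm_ring
        rw [hx, hQP, hQw, hwP, hww]
        abel
      refine ⟨(Q + 1 - w) * (P + 1 - w), ?_, ?_, P + 1 - w, Q + 1 - w, h1.symm, rfl⟩
      · show ((Q + 1 - w) * (P + 1 - w)) * ((Q + 1 - w) * (P + 1 - w))
          = (Q + 1 - w) * (P + 1 - w)
        rw [mul_assoc, ← mul_assoc (P + 1 - w) (Q + 1 - w) (P + 1 - w), h1, one_mul]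
      · rw [h2]
        intro hc
        apply hFw
        have hc2 : F + 1 = w + 1 := by
          rw [sub_eq_iff_eq_add] at hc
          rw [hc, add_comm]
        exact add_right_cancel hc2
end
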